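/- Let R : ℝ → ℝ be differentiable and concave on [0,1] with R(0) = R(1) = 0, and let κ* ∈ [0,1] be a point where R attains its maximum over [0,1]. Then for every measurable function x : [0,1] → [0,1], ∫_0^{1} R'(q)·x(q) dq ≤ 2 · ∫_0^{1} R(q) dq. (That is, for every tie-breaking parameter β ∈ [0,1], the leaderboard mechanism, whose expected per-user contribution under linear status is ∫_0^1 R(q) dq, is a 2-approximation to the total contribution of the optimal mechanism.) -/

import Mathlib

/-!
Since `R` is concave with its maximum at `κstar`, it increases on `[0, κstar]` and decreases on
`[κstar, 1]`. Hence `R' ≥ 0` before `κstar` and `R' ≤ 0` after it, so for `0 ≤ x ≤ 1` the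
contribution `∫ R' x` is at most `∫_0^κstar R' ≤ R κstar - R 0 = R κstar`. On the other hand, by
concavity `R` lies above the triangle with vertices `(0, 0)`, `(κstar, R κstar)`, `(1, 0)`, whose
area is `R κstar / 2`.
-/

open MeasureTheory intervalIntegral Set

section Unimodal

variable {s : Set ℝ} {f : ℝ → ℝ} {c : ℝ}

theorem ConcaveOn.monotoneOn_of_isMaxOn (hf : ConcaveOn ℝ s f) (hmax : IsMaxOn f s c)
    (hc : c ∈ s) : MonotoneOn f (s ∩ Iic c) := by
  intro p hp q hq hpq
  have hseg : q ∈ segment ℝ p c := by rw [segment_eq_Icc hp.2]; exact ⟨hpq, hq.2⟩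
  have := hf.ge_on_segment hp.1 hc hseg
  rwa [min_eq_left (isMaxOn_iff.1 hmax p hp.1)] at this

theorem ConcaveOn.antitoneOn_of_isMaxOn (hf : ConcaveOn ℝ s f) (hmax : IsMaxOn f s c)
    (hc : c ∈ s) : AntitoneOn f (s ∩ Ici c) := by
  intro p hp q hq hpq
  have hseg : p ∈ segment ℝ q c := by rw [segment_symm, segment_eq_Icc hq.2]; exact ⟨hp.2, hpq⟩
  have := hf.ge_on_segment hq.1 hc hseg
  rwa [min_eq_left (isMaxOn_iff.1 hmax q hq.1)] at this

end Unimodal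

section DerivIntegral

variable {f x : ℝ → ℝ} {a b c : ℝ}

theorem MonotoneOn.integral_deriv_mul_le (hf : MonotoneOn f (Icc a b)) (hab : a ≤ b)
    (hx : ∀ q ∈ Ioo a b, x q ≤ 1)
    (hint : IntervalIntegrable (fun q => deriv f q * x q) volume a b) :
    ∫ q in a..b, deriv f q * x q ≤ f b - f a := by
  have hderiv : ∀ q ∈ Ioo a b, 0 ≤ deriv f q := fun q hq => by
    rw [← derivWithin_of_mem_nhds (Icc_mem_nhds hq.1 hq.2)]
    exact hf.derivWithin_nonneg
  rw [← uIcc_of_le hab] at hf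
  calc ∫ q in a..b, deriv f q * x q ≤ ∫ q in a..b, deriv f q :=
        integral_mono_on_of_le_Ioo hab hint hf.intervalIntegrable_deriv fun q hq =>
          mul_le_of_le_one_right (hderiv q hq) (hx q hq)
    _ ≤ f b - f a := by
        have := hf.intervalIntegral_deriv_mem_uIcc
        rw [uIcc_of_le (sub_nonneg.2 (hf left_mem_uIcc right_mem_uIcc hab))] at this
        exact this.2

theorem AntitoneOn.integral_deriv_mul_nonpos (hf : AntitoneOn f (Icc a b)) (hab : a ≤ b)
    (hx : ∀ q ∈ Ioo a b, 0 ≤ x q)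
    (hint : IntervalIntegrable (fun q => deriv f q * x q) volume a b) :
    ∫ q in a..b, deriv f q * x q ≤ 0 := by
  have hderiv : ∀ q ∈ Ioo a b, deriv f q ≤ 0 := fun q hq => by
    rw [← derivWithin_of_mem_nhds (Icc_mem_nhds hq.1 hq.2)]
    exact hf.derivWithin_nonpos
  simpa using integral_mono_on_of_le_Ioo hab hint intervalIntegrable_const fun q hq =>
    mul_nonpos_of_nonpos_of_nonneg (hderiv q hq) (hx q hq)

theorem integral_deriv_mul_le_sub_of_monotoneOn_of_antitoneOn (hmono : MonotoneOn f (Icc a c))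
    (hanti : AntitoneOn f (Icc c b)) (hac : a ≤ c) (hcb : c ≤ b)
    (hx : ∀ q ∈ Icc a b, x q ∈ Icc 0 1) :
    ∫ q in a..b, deriv f q * x q ≤ f c - f a := by
  by_cases hint : IntervalIntegrable (fun q => deriv f q * x q) volume a b
  · have hint_ac := hint.mono_set (uIcc_subset_uIcc_left (Icc_subset_uIcc ⟨hac, hcb⟩))
    have hint_cb := hint.mono_set (uIcc_subset_uIcc_right (Icc_subset_uIcc ⟨hac, hcb⟩))
    rw [← integral_add_adjacent_intervals hint_ac hint_cb]
    have hle := hmono.integral_deriv_mul_le hac (fun q hq => (hx q ⟨hq.1.le, hq.2.le.trans hcb⟩).2)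
      hint_ac
    have hnonpos := hanti.integral_deriv_mul_nonpos hcb
      (fun q hq => (hx q ⟨hac.trans hq.1.le, hq.2.le⟩).1) hint_cb
    linarith
  · rw [integral_undef hint, sub_nonneg]
    exact hmono ⟨le_rfl, hac⟩ ⟨hac, le_rfl⟩ hac

end DerivIntegral

section Trapezoid

variable {f : ℝ → ℝ} {a b c q : ℝ}

theorem ConcaveOn.add_le_apply_add_apply_sub (hf : ConcaveOn ℝ (Icc a b) f) (hq : q ∈ Icc a b) :
    f a + f b ≤ f q + f (a + b - q) := by
  rcases hq.1.eq_or_lt with rfl | haq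
  · simp
  have hab : a < b := haq.trans_le hq.2
  have hba : b - a ≠ 0 := (sub_pos.2 hab).ne'
  set t := (b - q) / (b - a)
  have ht0 : 0 ≤ t := div_nonneg (by linarith [hq.2]) (by linarith)
  have ht1 : 0 ≤ 1 - t := by rw [sub_nonneg, div_le_one (by linarith)]; linarith
  have hmem_a : a ∈ Icc a b := left_mem_Icc.2 hab.le
  have hmem_b : b ∈ Icc a b := right_mem_Icc.2 hab.le
  have h₁ := hf.2 hmem_a hmem_b ht0 ht1 (by ring)
  have h₂ := hf.2 hmem_a hmem_b ht1 ht0 (by ring)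
  have hq₁ : t • a + (1 - t) • b = q := by simp only [smul_eq_mul, t]; field_simp; ring
  have hq₂ : (1 - t) • a + t • b = a + b - q := by simp only [smul_eq_mul, t]; field_simp; ring
  rw [hq₁] at h₁
  rw [hq₂] at h₂
  simp only [smul_eq_mul] at h₁ h₂
  linarith

theorem ConcaveOn.trapezoid_le_integral (hf : ConcaveOn ℝ (Icc a b) f) (hab : a ≤ b)
    (hfi : IntervalIntegrable f volume a b) :
    (b - a) * ((f a + f b) / 2) ≤ ∫ q in a..b, f q := by
  have hrefl : IntervalIntegrable (fun q => f (a + b - q)) volume a b := by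
    simpa using (hfi.comp_sub_left (a + b)).symm
  have hsym : ∫ q in a..b, f (a + b - q) = ∫ q in a..b, f q := by
    rw [integral_comp_sub_left]; simp
  have := integral_mono_on hab intervalIntegrable_const (hfi.add hrefl) fun q hq =>
    hf.add_le_apply_add_apply_sub hq
  rw [intervalIntegral.integral_const, integral_add hfi hrefl, hsym, smul_eq_mul] at this
  linarith

theorem ConcaveOn.mul_le_two_mul_integral (hf : ConcaveOn ℝ (Icc a b) f)
    (hfi : IntervalIntegrable f volume a b) (ha : 0 ≤ f a) (hb : 0 ≤ f b) (hc : c ∈ Icc a b) :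
    (b - a) * f c ≤ 2 * ∫ q in a..b, f q := by
  have hsub : uIcc a c ⊆ uIcc a b := uIcc_subset_uIcc_left (Icc_subset_uIcc hc)
  have hsub' : uIcc c b ⊆ uIcc a b := uIcc_subset_uIcc_right (Icc_subset_uIcc hc)
  have h₁ := (hf.subset (Icc_subset_Icc_right hc.2) (convex_Icc _ _)).trapezoid_le_integral hc.1
    (hfi.mono_set hsub)
  have h₂ := (hf.subset (Icc_subset_Icc_left hc.1) (convex_Icc _ _)).trapezoid_le_integral hc.2
    (hfi.mono_set hsub')
  rw [← integral_add_adjacent_intervals (hfi.mono_set hsub) (hfi.mono_set hsub')]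
  nlinarith [mul_nonneg (sub_nonneg.2 hc.1) ha, mul_nonneg (sub_nonneg.2 hc.2) hb]

end Trapezoid

theorem leaderboard_two_approx_tie_breaking_general
    (R : ℝ → ℝ)
    (hR_concave : ConcaveOn ℝ (Set.Icc 0 1) R)
    (hR0 : R 0 = 0) (hR1 : R 1 = 0)
    (κstar : ℝ) (hκ : κstar ∈ Set.Icc (0:ℝ) 1)
    (hκ_max : ∀ q ∈ Set.Icc (0:ℝ) 1, R q ≤ R κstar)
    (x : ℝ → ℝ)
    (hx_mem : ∀ q ∈ Set.Icc (0:ℝ) 1, x q ∈ Set.Icc (0:ℝ) 1) :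
    (∫ q in (0:ℝ)..1, deriv R q * x q) ≤ 2 * ∫ q in (0:ℝ)..1, R q := by
  have hmax : IsMaxOn R (Icc 0 1) κstar := isMaxOn_iff.2 hκ_max
  have hmono : MonotoneOn R (Icc 0 κstar) :=
    (hR_concave.monotoneOn_of_isMaxOn hmax hκ).mono fun q hq => ⟨⟨hq.1, hq.2.trans hκ.2⟩, hq.2⟩
  have hanti : AntitoneOn R (Icc κstar 1) :=
    (hR_concave.antitoneOn_of_isMaxOn hmax hκ).mono fun q hq => ⟨⟨hκ.1.trans hq.1, hq.2⟩, hq.1⟩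
  have hRi : IntervalIntegrable R volume 0 1 :=
    (uIcc_of_le hκ.1 ▸ hmono).intervalIntegrable.trans (uIcc_of_le hκ.2 ▸ hanti).intervalIntegrable
  calc ∫ q in (0:ℝ)..1, deriv R q * x q ≤ R κstar - R 0 :=
        integral_deriv_mul_le_sub_of_monotoneOn_of_antitoneOn hmono hanti hκ.1 hκ.2 hx_mem
    _ = (1 - 0) * R κstar := by rw [hR0]; ring
    _ ≤ 2 * ∫ q in (0:ℝ)..1, R q := hR_concave.mul_le_two_mul_integral hRi hR0.ge hR1.ge hκ

theorem leaderboard_two_approx_tie_breaking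
    (R : ℝ → ℝ)
    (hR_diff : DifferentiableOn ℝ R (Set.Icc 0 1))
    (hR_concave : ConcaveOn ℝ (Set.Icc 0 1) R)
    (hR0 : R 0 = 0) (hR1 : R 1 = 0)
    (κstar : ℝ) (hκ : κstar ∈ Set.Icc (0:ℝ) 1)
    (hκ_max : ∀ q ∈ Set.Icc (0:ℝ) 1, R q ≤ R κstar)
    (x : ℝ → ℝ) (hx_meas : Measurable x)
    (hx_mem : ∀ q ∈ Set.Icc (0:ℝ) 1, x q ∈ Set.Icc (0:ℝ) 1) :
    (∫ q in (0:ℝ)..1, deriv R q * x q) ≤ 2 * ∫ q in (0:ℝ)..1, R q :=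
  leaderboard_two_approx_tie_breaking_general R hR_concave hR0 hR1 κstar hκ hκ_max x hx_mem
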